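/- arXiv:2409.00812 — 5 statements merged into one kernel-verified Lean document; each statement's English description precedes it below -/
import Mathlib

section
/- Existence, uniqueness, and value-iteration convergence for the Bellman operator: Let S be a nonempty set and let T be an operator on the space of bounded real-valued functions on S (with the supremum metric) satisfying Blackwell's conditions: monotonicity (f ≤ g pointwise implies Tf ≤ Tg pointwise) and discounting with modulus β ∈ [0,1) (for every constant c ≥ 0, T(f + c) ≤ Tf + βc pointwise). Then T has a unique fixed point v (i.e., a unique bounded function v with Tv = v), and for every bounded function v₀ the iterates Tⁿv₀ converge to v uniformly (in the supremum metric) as n → ∞. -/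
open BoundedContinuousFunction Filter

/-- Existence, uniqueness, and value-iteration convergence for the Bellman
operator.  `S` is a nonempty set (equipped with the discrete topology, so that
`S →ᵇ ℝ` is exactly the space of bounded real-valued functions on `S`, with the
supremum metric).  If `T` satisfies Blackwell's conditions (monotonicity and
discounting with modulus `β ∈ [0,1)`), then `T` has a unique fixed point `v`,
and for every bounded `v₀` the iterates `T^[n] v₀` converge to `v` in the
supremum metric (i.e. uniformly). -/
theorem bellman_fixed_point
    {S : Type*} [TopologicalSpace S] [DiscreteTopology S] [Nonempty S]
    (T : (S →ᵇ ℝ) → (S →ᵇ ℝ))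
    (β : ℝ) (hβ0 : 0 ≤ β) (hβ1 : β < 1)
    (h_mono : ∀ f g : S →ᵇ ℝ, (∀ x, f x ≤ g x) → ∀ x, T f x ≤ T g x)
    (h_disc : ∀ (f : S →ᵇ ℝ) (c : ℝ), 0 ≤ c →
      ∀ x, T (f + BoundedContinuousFunction.const S c) x ≤ T f x + β * c) :
    ∃ v : S →ᵇ ℝ, T v = v ∧ (∀ w : S →ᵇ ℝ, T w = w → w = v) ∧
      ∀ v₀ : S →ᵇ ℝ, Tendsto (fun n : ℕ => T^[n] v₀) atTop (nhds v) := by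
  have key : ∀ f g : S →ᵇ ℝ, ∀ x, T f x ≤ T g x + β * dist f g := by
    intro f g x
    have h1 : ∀ y, f y ≤ (g + BoundedContinuousFunction.const S (dist f g)) y := by
      intro y
      have := BoundedContinuousFunction.dist_coe_le_dist (f := f) (g := g) y
      simp only [BoundedContinuousFunction.coe_add, BoundedContinuousFunction.const_apply,
        Pi.add_apply]
      have h2 : |f y - g y| ≤ dist f g := by
        rw [← Real.dist_eq]; exact BoundedContinuousFunction.dist_coe_le_dist y
      linarith [(abs_le.mp h2).2]
    calc T f x ≤ T (g + BoundedContinuousFunction.const S (dist f g)) x :=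
          h_mono _ _ h1 x
      _ ≤ T g x + β * dist f g := h_disc g (dist f g) dist_nonneg x
  have hlip : LipschitzWith ⟨β, hβ0⟩ T := by
    apply LipschitzWith.of_dist_le_mul
    intro f g
    have hd : dist (T f) (T g) ≤ β * dist f g := by
      apply BoundedContinuousFunction.dist_le (by positivity) |>.mpr
      intro x
      rw [Real.dist_eq, abs_le]
      constructor
      · have := key g f x
        rw [dist_comm g f] at this
        linarith
      · linarith [key f g x]
    exact hd
  have hcontr : ContractingWith ⟨β, hβ0⟩ T := ⟨by exact_mod_cast hβ1, hlip⟩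
  refine ⟨hcontr.fixedPoint T, hcontr.fixedPoint_isFixedPt, fun w hw =>
    hcontr.fixedPoint_unique hw, fun v₀ => hcontr.tendsto_iterate_fixedPoint v₀⟩
end

section
/- Second welfare theorem in the paper's Debreu–Stokey–Lucas setting: Let (x, y) be a Pareto optimal allocation and assume: each Xᵢ is convex; each uᵢ is continuous; for each i, if x, x′ ∈ Xᵢ with uᵢ(x) > uᵢ(x′) and θ ∈ (0,1), then uᵢ(θx + (1−θ)x′) > uᵢ(x′); the aggregate production set Y = Σⱼ Yⱼ (the set of sums Σⱼ yⱼ with yⱼ ∈ Yⱼ) is convex; either Y has an interior point or S is finite-dimensional; and for some consumer i₀ there exists x̂ ∈ X_{i₀} with u_{i₀}(x̂) > u_{i₀}(x_{i₀}). Then there exists a nonzero continuous linear functional φ : S → ℝ such that for each i, every x ∈ Xᵢ with uᵢ(x) ≥ uᵢ(xᵢ) satisfies φ(x) ≥ φ(xᵢ), and for each j, every y ∈ Yⱼ satisfies φ(y) ≤ φ(yⱼ). -/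
open Set Filter Topology Pointwise

section Helpers

variable {S : Type*} [NormedAddCommGroup S] [NormedSpace ℝ S]

/-- Quasi-concavity from the strict convexity-of-preferences condition plus continuity. -/
lemma swt_quasiconcave {X : Set S} {u : S → ℝ}
    (hX : Convex ℝ X) (hc : ContinuousOn u X)
    (hs : ∀ a ∈ X, ∀ b ∈ X, u b < u a → ∀ θ : ℝ, 0 < θ → θ < 1 →
      u b < u (θ • a + (1 - θ) • b))
    {a b : S} (ha : a ∈ X) (hb : b ∈ X) {θ : ℝ} (h0 : 0 ≤ θ) (h1 : θ ≤ 1) :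
    min (u a) (u b) ≤ u (θ • a + (1 - θ) • b) := by
  rcases eq_or_lt_of_le h0 with rfl | h0
  · simpa using min_le_right (u a) (u b)
  rcases eq_or_lt_of_le h1 with rfl | h1
  · simpa using min_le_left (u a) (u b)
  by_contra hlt
  push_neg at hlt
  set g : ℝ → S := fun t => t • a + (1 - t) • b with hg
  have hgmem : ∀ t ∈ Icc (0:ℝ) 1, g t ∈ X := fun t ht =>
    hX ha hb ht.1 (by linarith [ht.2]) (by ring)
  have hga : u (g θ) < u a := lt_of_lt_of_le hlt (min_le_left _ _)
  have hgb : u (g θ) < u b := lt_of_lt_of_le hlt (min_le_right _ _)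
  have hf : ContinuousOn (fun t => u (g t)) (Icc (0:ℝ) 1) := by
    apply hc.comp _ hgmem
    exact ((continuous_id.smul continuous_const).add
      ((continuous_const.sub continuous_id).smul continuous_const)).continuousOn
  have cwa : ContinuousWithinAt (fun t => u (g t)) (Icc (0:ℝ) 1) θ :=
    hf θ ⟨h0.le, h1.le⟩
  have hev : ∀ᶠ t in 𝓝[Icc (0:ℝ) 1] θ, u (g t) < u b := cwa (Iio_mem_nhds hgb)
  have hev' : ∀ᶠ t in 𝓝[Ioo θ 1] θ, u (g t) < u b :=
    hev.filter_mono (nhdsWithin_mono θ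
      ((Set.Ioo_subset_Icc_self).trans (Set.Icc_subset_Icc h0.le le_rfl)))
  have hne : (𝓝[Ioo θ 1] θ).NeBot := by
    rw [← mem_closure_iff_nhdsWithin_neBot, closure_Ioo h1.ne]
    exact ⟨le_refl θ, h1.le⟩
  obtain ⟨θ₁, hθ₁u, hθ₁mem⟩ := (hev'.and eventually_mem_nhdsWithin).exists
  -- (i) u (g θ₁) < u (g θ)
  have hθ₁0 : (0:ℝ) < θ₁ := lt_trans h0 hθ₁mem.1
  have hθ₁X : g θ₁ ∈ X := hgmem θ₁ ⟨hθ₁0.le, hθ₁mem.2.le⟩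
  have hgθX : g θ ∈ X := hgmem θ ⟨h0.le, h1.le⟩
  have hμ0 : 0 < 1 - θ / θ₁ := by
    have : θ / θ₁ < 1 := (div_lt_one hθ₁0).mpr hθ₁mem.1
    linarith
  have hμ1 : 1 - θ / θ₁ < 1 := by
    have : 0 < θ / θ₁ := div_pos h0 hθ₁0
    linarith
  have haux1 : θ₁ ≠ 0 := ne_of_gt hθ₁0
  have haux2 : (1:ℝ) - θ ≠ 0 := by intro h; rw [sub_eq_zero] at h; exact absurd h.symm (ne_of_lt h1)
  have hi := hs b hb (g θ₁) hθ₁X hθ₁u (1 - θ / θ₁) hμ0 hμ1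
  have hid1 : (1 - θ / θ₁) • b + (1 - (1 - θ / θ₁)) • g θ₁ = g θ := by
    rw [hg]
    match_scalars <;> field_simp <;> ring
  rw [hid1] at hi
  -- (ii) u (g θ) < u (g θ₁)
  have hν0 : 0 < (θ₁ - θ) / (1 - θ) := div_pos (by linarith [hθ₁mem.1]) (by linarith)
  have hν1 : (θ₁ - θ) / (1 - θ) < 1 := by
    rw [div_lt_one (by linarith)]
    linarith [hθ₁mem.2]
  have hii := hs a ha (g θ) hgθX hga ((θ₁ - θ) / (1 - θ)) hν0 hν1
  have hid2 : ((θ₁ - θ) / (1 - θ)) • a + (1 - (θ₁ - θ) / (1 - θ)) • g θ = g θ₁ := by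
    rw [hg]
    match_scalars <;> field_simp [haux2] <;> ring
  rw [hid2] at hii
  linarith

lemma swt_sep_of_interior {C : Set S}
    (hC : Convex ℝ C) (hint : (interior C).Nonempty) (h0 : (0:S) ∉ C) :
    ∃ φ : S →L[ℝ] ℝ, φ ≠ 0 ∧ ∀ c ∈ C, 0 ≤ φ c := by
  obtain ⟨c₀, hc₀⟩ := hint
  obtain ⟨f, hf⟩ := geometric_hahn_banach_open_point hC.interior isOpen_interior
    (fun h => h0 (interior_subset h))
  have hfc₀ : f c₀ < 0 := by simpa using hf c₀ hc₀
  refine ⟨-f, ?_, ?_⟩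
  · intro h
    have hf0 : f = 0 := by rwa [neg_eq_zero] at h
    rw [hf0] at hfc₀; simp at hfc₀
  · intro c hc
    simp only [ContinuousLinearMap.neg_apply, neg_nonneg]
    by_contra hpos
    push_neg at hpos
    have hkey : ∀ t ∈ Set.Ioc (0:ℝ) 1, f c + t * (f c₀ - f c) < 0 := by
      intro t ht
      have := hf _ (hC.add_smul_sub_mem_interior hc hc₀ ht)
      simpa using this
    have h1 := hkey 1 ⟨one_pos, le_refl 1⟩
    have hfc₀' : f c₀ < 0 := by linarith
    set t := f c / (f c - f c₀) with htdef
    have hden : 0 < f c - f c₀ := by linarith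
    have ht0 : 0 < t := div_pos hpos hden
    have ht1 : t ≤ 1 := by
      rw [div_le_one hden]; linarith
    have hk := hkey t ⟨ht0, ht1⟩
    have hne : f c - f c₀ ≠ 0 := ne_of_gt hden
    have hcancel : t * (f c - f c₀) = f c := by
      rw [htdef]; exact div_mul_cancel₀ _ hne
    nlinarith [hk, hcancel]

lemma swt_sep_findim [FiniteDimensional ℝ S] {C : Set S}
    (hC : Convex ℝ C) (hne : C.Nonempty) (h0 : (0:S) ∉ C) :
    ∃ φ : S →L[ℝ] ℝ, φ ≠ 0 ∧ ∀ c ∈ C, 0 ≤ φ c := by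
  by_cases hcl : (0:S) ∈ closure C
  · by_cases hsp : affineSpan ℝ C = ⊤
    · exact swt_sep_of_interior hC (hC.interior_nonempty_iff_affineSpan_eq_top.mpr hsp) h0
    · have h0V : (0:S) ∈ affineSpan ℝ C := by
        have hsub : closure C ⊆ (affineSpan ℝ C : Set S) :=
          closure_minimal (subset_affineSpan ℝ C)
            (affineSpan ℝ C).closed_of_finiteDimensional
        exact hsub hcl
      have hCW : ∀ c ∈ C, c ∈ (affineSpan ℝ C).direction := by
        intro c hc
        have := AffineSubspace.vsub_mem_direction (subset_affineSpan ℝ C hc) h0V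
        simpa using this
      have hWlt : (affineSpan ℝ C).direction < ⊤ := by
        rcases lt_or_eq_of_le (le_top (a := (affineSpan ℝ C).direction)) with h | h
        · exact h
        · exact absurd ((AffineSubspace.direction_eq_top_iff_of_nonempty ⟨0, h0V⟩).mp h) hsp
      obtain ⟨f, hf0, hfbot⟩ :=
        Submodule.exists_dual_map_eq_bot_of_lt_top hWlt inferInstance
      obtain ⟨v, hv⟩ := DFunLike.ne_iff.mp hf0
      refine ⟨LinearMap.toContinuousLinearMap f, ?_, ?_⟩
      · intro h
        apply hv
        have : LinearMap.toContinuousLinearMap f v = 0 := by rw [h]; rfl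
        simpa using this
      · intro c hc
        have : f c ∈ Submodule.map f (affineSpan ℝ C).direction :=
          Submodule.mem_map_of_mem (hCW c hc)
        rw [hfbot] at this
        simp only [Submodule.mem_bot] at this
        simp [LinearMap.coe_toContinuousLinearMap', this]
  · obtain ⟨f, w, hw, hf⟩ :=
      geometric_hahn_banach_point_closed hC.closure isClosed_closure hcl
    rw [map_zero] at hw
    refine ⟨f, ?_, ?_⟩
    · intro h
      obtain ⟨c, hc⟩ := hne
      have := hf c (subset_closure hc)
      rw [h] at this; simp at this; linarith
    · intro c hc
      have := hf c (subset_closure hc)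
      linarith

lemma swt_sep_sets {A B : Set S}
    (hA : Convex ℝ A) (hB : Convex ℝ B) (hAne : A.Nonempty) (hBne : B.Nonempty)
    (hdisj : Disjoint A B)
    (hcase : (interior B).Nonempty ∨ FiniteDimensional ℝ S) :
    ∃ φ : S →L[ℝ] ℝ, φ ≠ 0 ∧ ∀ a ∈ A, ∀ b ∈ B, φ b ≤ φ a := by
  have hCconv : Convex ℝ (A - B) := hA.sub hB
  have h0 : (0:S) ∉ A - B := by
    intro hmem
    rw [Set.mem_sub] at hmem
    obtain ⟨a, ha, b, hb, hab⟩ := hmem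
    have : a = b := by rwa [sub_eq_zero] at hab
    subst this
    exact (Set.disjoint_left.mp hdisj ha) hb
  have key : ∃ φ : S →L[ℝ] ℝ, φ ≠ 0 ∧ ∀ c ∈ A - B, 0 ≤ φ c := by
    rcases hcase with hint | hfd
    · apply swt_sep_of_interior hCconv ?_ h0
      obtain ⟨a₀, ha₀⟩ := hAne
      obtain ⟨b₀, hb₀⟩ := hint
      have hopen : IsOpen ((fun z => a₀ + -z) '' interior B) := by
        have : IsOpenMap (fun z : S => a₀ + -z) :=
          (Homeomorph.addLeft a₀).isOpenMap.comp (Homeomorph.neg S).isOpenMap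
        exact this _ isOpen_interior
      have hsub : (fun z => a₀ + -z) '' interior B ⊆ A - B := by
        rintro _ ⟨b, hb, rfl⟩
        show a₀ + -b ∈ A - B
        rw [← sub_eq_add_neg]
        exact Set.sub_mem_sub ha₀ (interior_subset hb)
      have := interior_maximal hsub hopen
      exact ⟨a₀ + -b₀, this ⟨b₀, hb₀, rfl⟩⟩
    · obtain ⟨a₀, ha₀⟩ := hAne
      obtain ⟨b₀, hb₀⟩ := hBne
      exact swt_sep_findim hCconv ⟨a₀ - b₀, Set.sub_mem_sub ha₀ hb₀⟩ h0
  obtain ⟨φ, hφ0, hφ⟩ := key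
  refine ⟨φ, hφ0, fun a ha b hb => ?_⟩
  have := hφ (a - b) (Set.sub_mem_sub ha hb)
  rw [map_sub] at this
  linarith

end Helpers


/-- An allocation `(x, y)` is feasible: each consumer's choice lies in their
consumption set, each firm's choice lies in their production set, and markets
clear. -/
def Feasible {S ι κ : Type*} [AddCommGroup S] [Fintype ι] [Fintype κ]
    (X : ι → Set S) (Y : κ → Set S) (x : ι → S) (y : κ → S) : Prop :=
  (∀ i, x i ∈ X i) ∧ (∀ j, y j ∈ Y j) ∧ (∑ i, x i) - (∑ j, y j) = 0

/-- An allocation is Pareto optimal: it is feasible, and no feasible allocation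
makes every consumer at least as well off and some consumer strictly better
off. -/
def ParetoOptimal {S ι κ : Type*} [AddCommGroup S] [Fintype ι] [Fintype κ]
    (X : ι → Set S) (u : ι → S → ℝ) (Y : κ → Set S) (x : ι → S) (y : κ → S) : Prop :=
  Feasible X Y x y ∧
    ¬ ∃ (x' : ι → S) (y' : κ → S), Feasible X Y x' y' ∧
        (∀ i, u i (x i) ≤ u i (x' i)) ∧ (∃ i, u i (x i) < u i (x' i))

/-- The aggregate production set `Y = Σⱼ Yⱼ`. -/
def AggregateProduction {S κ : Type*} [AddCommGroup S] [Fintype κ]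
    (Y : κ → Set S) : Set S :=
  {z : S | ∃ y : κ → S, (∀ j, y j ∈ Y j) ∧ z = ∑ j, y j}

/-- Second welfare theorem (Debreu–Stokey–Lucas setting): a Pareto optimal
allocation can be supported by a nonzero continuous linear price system,
provided consumption sets are convex, utilities are continuous and satisfy the
strict convexity-of-preferences condition, the aggregate production set is
convex and either has an interior point or the commodity space is
finite-dimensional, and some consumer is not satiated at the allocation. -/
theorem second_welfare_theorem
    {S : Type*} [NormedAddCommGroup S] [NormedSpace ℝ S]
    {ι κ : Type*} [Fintype ι] [Fintype κ]
    (X : ι → Set S) (u : ι → S → ℝ) (Y : κ → Set S)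
    (x : ι → S) (y : κ → S)
    (h_pareto : ParetoOptimal X u Y x y)
    (hX_cvx : ∀ i, Convex ℝ (X i))
    (hu_cont : ∀ i, ContinuousOn (u i) (X i))
    (hu_strict : ∀ i, ∀ a ∈ X i, ∀ b ∈ X i, u i b < u i a →
      ∀ θ : ℝ, 0 < θ → θ < 1 → u i b < u i (θ • a + (1 - θ) • b))
    (hY_cvx : Convex ℝ (AggregateProduction Y))
    (h_int : (interior (AggregateProduction Y)).Nonempty ∨ FiniteDimensional ℝ S)
    (h_nonsat : ∃ i₀, ∃ xhat ∈ X i₀, u i₀ (x i₀) < u i₀ xhat) :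
    ∃ φ : S →L[ℝ] ℝ, φ ≠ 0 ∧
      (∀ i, ∀ z ∈ X i, u i (x i) ≤ u i z → φ (x i) ≤ φ z) ∧
      (∀ j, ∀ z ∈ Y j, φ z ≤ φ (y j)) := by
  classical
  obtain ⟨⟨hxX, hyY, hmkt⟩, hnd⟩ := h_pareto
  obtain ⟨i₀, xhat, hxhatX, hxhat⟩ := h_nonsat
  set Q : ι → Set S := fun i =>
    if i = i₀ then {z ∈ X i | u i (x i) < u i z} else {z ∈ X i | u i (x i) ≤ u i z}
    with hQdef
  have hQsubX : ∀ i, Q i ⊆ X i := by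
    intro i z hz
    by_cases h : i = i₀
    · subst h; simp only [hQdef, if_pos rfl, Set.mem_setOf_eq] at hz; exact hz.1
    · simp only [hQdef, if_neg h, Set.mem_setOf_eq] at hz; exact hz.1
  have hQu : ∀ i, ∀ z ∈ Q i, u i (x i) ≤ u i z := by
    intro i z hz
    by_cases h : i = i₀
    · subst h; simp only [hQdef, if_pos rfl, Set.mem_setOf_eq] at hz; exact hz.2.le
    · simp only [hQdef, if_neg h, Set.mem_setOf_eq] at hz; exact hz.2
  have hQs : ∀ z ∈ Q i₀, u i₀ (x i₀) < u i₀ z := by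
    intro z hz
    simp only [hQdef, if_pos rfl, Set.mem_setOf_eq] at hz
    exact hz.2
  have hQmem : ∀ i, ∀ z ∈ X i, u i (x i) ≤ u i z → i ≠ i₀ → z ∈ Q i := by
    intro i z hzX hzu hne
    simp only [hQdef, if_neg hne, Set.mem_setOf_eq]
    exact ⟨hzX, hzu⟩
  have hQmem₀ : ∀ z ∈ X i₀, u i₀ (x i₀) < u i₀ z → z ∈ Q i₀ := by
    intro z hzX hzu
    simp only [hQdef, if_pos rfl, Set.mem_setOf_eq]
    exact ⟨hzX, hzu⟩
  have hQconv : ∀ i, Convex ℝ (Q i) := by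
    intro i
    have base : ∀ i (z₁ : S), z₁ ∈ X i → (z₂ : S) → z₂ ∈ X i → ∀ p q : ℝ, 0 ≤ p → 0 ≤ q →
        p + q = 1 → p • z₁ + q • z₂ ∈ X i ∧ min (u i z₁) (u i z₂) ≤ u i (p • z₁ + q • z₂) := by
      intro i z₁ hz₁X z₂ hz₂X p q hp hq hpq
      have hq' : q = 1 - p := by linarith
      have hm := swt_quasiconcave (hX_cvx i) (hu_cont i) (hu_strict i) hz₁X hz₂X hp
        (by linarith : p ≤ 1) (θ := p)
      rw [← hq'] at hm
      exact ⟨hX_cvx i hz₁X hz₂X hp hq hpq, hm⟩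
    by_cases h : i = i₀
    · subst h; simp only [hQdef, if_pos rfl]
      intro z₁ hz₁ z₂ hz₂ p q hp hq hpq
      obtain ⟨hXm, hm⟩ := base _ z₁ hz₁.1 z₂ hz₂.1 p q hp hq hpq
      exact ⟨hXm, lt_of_lt_of_le (lt_min hz₁.2 hz₂.2) hm⟩
    · simp only [hQdef, if_neg h]
      intro z₁ hz₁ z₂ hz₂ p q hp hq hpq
      obtain ⟨hXm, hm⟩ := base i z₁ hz₁.1 z₂ hz₂.1 p q hp hq hpq
      exact ⟨hXm, le_trans (le_min hz₁.2 hz₂.2) hm⟩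
  set A : Set S := {s | ∃ a : ι → S, (∀ i, a i ∈ Q i) ∧ s = ∑ i, a i} with hAdef
  have hAconv : Convex ℝ A := by
    rintro s ⟨p, hp, rfl⟩ t ⟨q, hq, rfl⟩ μ ν hμ hν hμν
    refine ⟨fun i => μ • p i + ν • q i, fun i => hQconv i (hp i) (hq i) hμ hν hμν, ?_⟩
    rw [Finset.smul_sum, Finset.smul_sum, ← Finset.sum_add_distrib]
  have hAne : A.Nonempty := by
    refine ⟨∑ i, Function.update x i₀ xhat i, Function.update x i₀ xhat, ?_, rfl⟩
    intro i
    by_cases h : i = i₀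
    · subst h; rw [Function.update_self]; exact hQmem₀ xhat hxhatX hxhat
    · rw [Function.update_of_ne h]; exact hQmem i (x i) (hxX i) le_rfl h
  have hBne : (AggregateProduction Y).Nonempty := ⟨∑ j, y j, y, hyY, rfl⟩
  have hdisj : Disjoint A (AggregateProduction Y) := by
    rw [Set.disjoint_left]
    rintro s ⟨a, haQ, rfl⟩ ⟨y', hy', hsum'⟩
    exact hnd ⟨a, y', ⟨fun i => hQsubX i (haQ i), hy', by rw [← hsum', sub_self]⟩,
      fun i => hQu i _ (haQ i), ⟨i₀, hQs _ (haQ i₀)⟩⟩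
  obtain ⟨φ, hφ0, hφ⟩ := swt_sep_sets hAconv hY_cvx hAne hBne hdisj h_int
  have hφ' : ∀ a ∈ closure A, ∀ b ∈ AggregateProduction Y, φ b ≤ φ a := by
    intro a ha b hb
    exact closure_minimal (fun a' ha' => hφ a' ha' b hb)
      (isClosed_le continuous_const φ.continuous) ha
  have hkey : ∀ z ∈ X i₀, u i₀ (x i₀) ≤ u i₀ z → z ∈ closure (Q i₀) := by
    intro z hzX hzu
    by_cases hzs : u i₀ (x i₀) < u i₀ z
    · exact subset_closure (hQmem₀ z hzX hzs)
    · have hlt : u i₀ z < u i₀ xhat := lt_of_le_of_lt (not_lt.mp hzs) hxhat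
      set g : ℝ → S := fun t => t • xhat + (1 - t) • z with hgdef
      have hg : ∀ t ∈ Set.Ioo (0:ℝ) 1, g t ∈ Q i₀ := by
        intro t ht
        refine hQmem₀ _ (hX_cvx i₀ hxhatX hzX ht.1.le (by linarith [ht.2]) (by ring)) ?_
        exact lt_of_le_of_lt hzu (hu_strict i₀ xhat hxhatX z hzX hlt t ht.1 ht.2)
      have hne : (𝓝[Set.Ioo (0:ℝ) 1] 0).NeBot := by
        rw [← mem_closure_iff_nhdsWithin_neBot, closure_Ioo (by norm_num : (0:ℝ) ≠ 1)]
        exact ⟨le_refl 0, zero_le_one⟩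
      have hcont : Continuous g := (continuous_id.smul continuous_const).add
        ((continuous_const.sub continuous_id).smul continuous_const)
      have htend : Filter.Tendsto g (𝓝[Set.Ioo (0:ℝ) 1] 0) (𝓝 z) := by
        have h0 : g 0 = z := by simp [hgdef]
        have := (hcont.tendsto 0).mono_left (nhdsWithin_le_nhds (s := Set.Ioo (0:ℝ) 1))
        rwa [h0] at this
      exact mem_closure_of_tendsto htend
        (eventually_mem_nhdsWithin.mono (fun t ht => hg t ht))
  have hsum : (∑ i, x i) = ∑ j, y j := sub_eq_zero.mp hmkt
  have hstarB : (∑ i, x i) ∈ AggregateProduction Y := ⟨y, hyY, hsum⟩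
  have hclosA : ∀ i, ∀ z ∈ X i, u i (x i) ≤ u i z →
      (∑ k, Function.update x i z k) ∈ closure A := by
    intro i z hzX hzu
    set h : ι → S := Function.update x i z with hhdef
    have hhQ : ∀ k, k ≠ i₀ → h k ∈ Q k := by
      intro k hk
      by_cases hki : k = i
      · subst hki; rw [hhdef, Function.update_self]; exact hQmem k z hzX hzu hk
      · rw [hhdef, Function.update_of_ne hki]; exact hQmem k (x k) (hxX k) le_rfl hk
    have hhi₀X : h i₀ ∈ X i₀ ∧ u i₀ (x i₀) ≤ u i₀ (h i₀) := by
      by_cases hki : i = i₀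
      · subst hki
        rw [hhdef, Function.update_self]
        exact ⟨hzX, hzu⟩
      · rw [hhdef, Function.update_of_ne (Ne.symm hki)]
        exact ⟨hxX i₀, le_rfl⟩
    have hcl : h i₀ ∈ closure (Q i₀) := hkey _ hhi₀X.1 hhi₀X.2
    set F : S → S := fun w => w + ∑ k ∈ Finset.univ \ {i₀}, h k with hFdef
    have hFcont : Continuous F := continuous_id.add continuous_const
    have hFQ : ∀ w ∈ Q i₀, F w ∈ A := by
      intro w hw
      refine ⟨Function.update h i₀ w, ?_, ?_⟩
      · intro k
        by_cases hk : k = i₀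
        · subst hk; rw [Function.update_self]; exact hw
        · rw [Function.update_of_ne hk]; exact hhQ k hk
      · rw [Finset.sum_update_of_mem (Finset.mem_univ i₀)]
    have himg : F (h i₀) ∈ closure A := by
      have h1 : F (h i₀) ∈ F '' closure (Q i₀) := ⟨h i₀, hcl, rfl⟩
      have h2 : F '' closure (Q i₀) ⊆ closure (F '' Q i₀) :=
        image_closure_subset_closure_image hFcont
      have h3 : F '' Q i₀ ⊆ A := by rintro _ ⟨w, hw, rfl⟩; exact hFQ w hw
      exact closure_mono h3 (h2 h1)
    have hFh : F (h i₀) = ∑ k, h k := by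
      rw [hFdef]
      exact (Finset.sum_eq_add_sum_sdiff_singleton_of_mem (Finset.mem_univ i₀) h).symm
    rwa [hFh] at himg
  have hstarA : (∑ i, x i) ∈ closure A := by
    have := hclosA i₀ (x i₀) (hxX i₀) le_rfl
    simpa [Function.update_eq_self] using this
  refine ⟨φ, hφ0, ?_, ?_⟩
  · intro i z hzX hzu
    have hA := hclosA i z hzX hzu
    have hle := hφ' _ hA _ hstarB
    rw [Finset.sum_update_of_mem (Finset.mem_univ i),
      Finset.sum_eq_add_sum_sdiff_singleton_of_mem (Finset.mem_univ i) x, map_add, map_add] at hle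
    linarith
  · intro j z hzY
    have hB' : (∑ k, Function.update y j z k) ∈ AggregateProduction Y := by
      refine ⟨Function.update y j z, ?_, rfl⟩
      intro k
      by_cases hk : k = j
      · subst hk; rw [Function.update_self]; exact hzY
      · rw [Function.update_of_ne hk]; exact hyY k
    have hle := hφ' _ hstarA _ hB'
    rw [hsum, Finset.sum_update_of_mem (Finset.mem_univ j),
      Finset.sum_eq_add_sum_sdiff_singleton_of_mem (Finset.mem_univ j) y, map_add, map_add] at hle
    linarith
end

section
/- Linearity of the Gaussian conditional expectation used in Lucas' islands model: Let r and p be independent real-valued random variables on a probability space, with r Gaussian with mean μ_r and variance σ_r² and p Gaussian with mean μ_p and variance σ_p², where σ_r² + σ_p² > 0. Then the conditional expectation of r given the σ-algebra generated by r + p satisfies, almost surely, E[r ∣ r + p] = μ_r + (σ_r²/(σ_r² + σ_p²)) · ((r + p) − μ_r − μ_p). -/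
/-!
Put `c = Cov(X, Y) / Var Y`. The pair `(X - c Y, Y)` is a linear image of the Gaussian vector
`(X, Y)`, hence Gaussian, and `Cov(X - c Y, Y) = 0`; uncorrelated jointly Gaussian variables are
independent, so `E[X - c Y | Y] = E[X - c Y]`, which is the regression formula
`E[X | Y] = E X + c (Y - E Y)`. For independent Gaussians `r`, `p` apply it to `X = r`, `Y = r + p`.
-/

open MeasureTheory ProbabilityTheory NNReal

namespace ProbabilityTheory

variable {Ω : Type*} {mΩ : MeasurableSpace Ω} {P : Measure Ω}

lemma covariance_eq_zero_of_variance_eq_zero [IsFiniteMeasure P] {X Y : Ω → ℝ}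
    (hY : MemLp Y 2 P) (h : Var[Y; P] = 0) : cov[X, Y; P] = 0 := by
  have hY_const := ae_eq_integral_of_variance_eq_zero hY h
  rw [covariance]
  exact integral_eq_zero_of_ae (by filter_upwards [hY_const] with ω hω; simp [hω])

lemma IndepFun.condExp_comap_ae_eq_integral {E β : Type*} [NormedAddCommGroup E]
    [NormedSpace ℝ E] [CompleteSpace E] [MeasurableSpace E] [BorelSpace E]
    [SecondCountableTopology E] [MeasurableSpace β] [IsFiniteMeasure P]
    {Z : Ω → E} {Y : Ω → β}
    (h : IndepFun Z Y P) (hZ : AEStronglyMeasurable Z P) (hY : Measurable Y) :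
    P[Z | MeasurableSpace.comap Y inferInstance] =ᵐ[P] fun _ ↦ P[Z] := by
  have hZ_mk : Measurable (hZ.mk Z) := hZ.stronglyMeasurable_mk.measurable
  calc P[Z | MeasurableSpace.comap Y inferInstance]
      =ᵐ[P] P[hZ.mk Z | MeasurableSpace.comap Y inferInstance] := condExp_congr_ae hZ.ae_eq_mk
    _ =ᵐ[P] fun _ ↦ P[hZ.mk Z] :=
      condExp_indep_eq hZ_mk.comap_le hY.comap_le (comap_measurable _).stronglyMeasurable
        (h.congr hZ.ae_eq_mk .rfl)
    _ = fun _ ↦ P[Z] := by rw [integral_congr_ae hZ.ae_eq_mk]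

lemma HasGaussianLaw.condExp_comap_ae_eq {X Y : Ω → ℝ}
    (hXY : HasGaussianLaw (fun ω ↦ (X ω, Y ω)) P) (hY : Measurable Y) :
    P[X | MeasurableSpace.comap Y inferInstance] =ᵐ[P]
      fun ω ↦ P[X] + cov[X, Y; P] / Var[Y; P] * (Y ω - P[Y]) := by
  have := hXY.isProbabilityMeasure
  set c := cov[X, Y; P] / Var[Y; P]
  have hX2 : MemLp X 2 P := hXY.fst.memLp_two
  have hY2 : MemLp Y 2 P := hXY.snd.memLp_two
  set Z := fun ω ↦ X ω - c * Y ω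
  have hZY : HasGaussianLaw (fun ω ↦ (Z ω, Y ω)) P := by
    simpa using hXY.map_fun
      ((ContinuousLinearMap.fst ℝ ℝ ℝ - c • ContinuousLinearMap.snd ℝ ℝ ℝ).prod
        (ContinuousLinearMap.snd ℝ ℝ ℝ))
  have hcov : cov[Z, Y; P] = 0 := by
    rw [covariance_fun_sub_left hX2 (hY2.const_mul c) hY2, covariance_const_mul_left,
      covariance_self hY2.aemeasurable]
    -- if `Var Y = 0` then `c = 0` by the junk value of division, and `Y` is a.s. constant
    rcases eq_or_ne Var[Y; P] 0 with h | h
    · simp [c, h, covariance_eq_zero_of_variance_eq_zero hY2 h]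
    · simp [c, h]
  have hZ_cond := (hZY.indepFun_of_covariance_eq_zero hcov).condExp_comap_ae_eq_integral
    hZY.fst.aemeasurable.aestronglyMeasurable hY
  have hZ1 : Integrable Z P := hZY.fst.integrable
  have hcY1 : Integrable (fun ω ↦ c * Y ω) P := (hY2.integrable one_le_two).const_mul c
  have hcY_cond :
      P[fun ω ↦ c * Y ω | MeasurableSpace.comap Y inferInstance] = fun ω ↦ c * Y ω :=
    condExp_of_stronglyMeasurable hY.comap_le
      ((comap_measurable Y).const_mul c).stronglyMeasurable hcY1
  have hX_eq : X = Z + fun ω ↦ c * Y ω := by ext; simp [Z]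
  calc P[X | MeasurableSpace.comap Y inferInstance]
      = P[Z + fun ω ↦ c * Y ω | MeasurableSpace.comap Y inferInstance] := by rw [← hX_eq]
    _ =ᵐ[P] P[Z | MeasurableSpace.comap Y inferInstance] +
        P[fun ω ↦ c * Y ω | MeasurableSpace.comap Y inferInstance] := condExp_add hZ1 hcY1 _
    _ =ᵐ[P] fun ω ↦ P[Z] + c * Y ω := by
      filter_upwards [hZ_cond] with ω hω
      rw [Pi.add_apply, hω, hcY_cond]
    _ = fun ω ↦ P[X] + c * (Y ω - P[Y]) := by
      ext ω
      rw [integral_sub (hX2.integrable one_le_two) hcY1, integral_const_mul]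
      ring

end ProbabilityTheory

theorem gaussian_condexp_linear_general
    {Ω : Type*} [MeasurableSpace Ω] (P : Measure Ω) [IsProbabilityMeasure P]
    (r p : Ω → ℝ) (hr : Measurable r) (hp : Measurable p)
    (h_indep : IndepFun r p P)
    (μr μp : ℝ) (σr2 σp2 : ℝ≥0)
    (hr_law : P.map r = gaussianReal μr σr2)
    (hp_law : P.map p = gaussianReal μp σp2) :
    P[r | MeasurableSpace.comap (fun ω => r ω + p ω) Real.measurableSpace]
      =ᵐ[P] fun ω =>
        μr + ((σr2 : ℝ) / ((σr2 : ℝ) + (σp2 : ℝ))) * ((r ω + p ω) - μr - μp) := by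
  have hr_hasLaw : HasLaw r (gaussianReal μr σr2) P := ⟨hr.aemeasurable, hr_law⟩
  have hp_hasLaw : HasLaw p (gaussianReal μp σp2) P := ⟨hp.aemeasurable, hp_law⟩
  have hrp : HasGaussianLaw (fun ω ↦ (r ω, p ω)) P :=
    h_indep.hasGaussianLaw hr_hasLaw.hasGaussianLaw hp_hasLaw.hasGaussianLaw
  have hr_sum : HasGaussianLaw (fun ω ↦ (r ω, r ω + p ω)) P := by
    simpa using hrp.map_fun ((ContinuousLinearMap.fst ℝ ℝ ℝ).prod
      (ContinuousLinearMap.fst ℝ ℝ ℝ + ContinuousLinearMap.snd ℝ ℝ ℝ))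
  have hr2 : MemLp r 2 P := hrp.fst.memLp_two
  have hp2 : MemLp p 2 P := hrp.snd.memLp_two
  have h_cov_rp : cov[r, p; P] = 0 := h_indep.covariance_eq_zero hr2 hp2
  have h_var_r : Var[r; P] = σr2 := by rw [hr_hasLaw.variance_eq, variance_id_gaussianReal]
  have h_var_p : Var[p; P] = σp2 := by rw [hp_hasLaw.variance_eq, variance_id_gaussianReal]
  have h_cov : cov[r, fun ω ↦ r ω + p ω; P] = σr2 := by
    change cov[r, r + p; P] = _
    rw [covariance_add_right hr2 hr2 hp2, covariance_self hr.aemeasurable, h_cov_rp, h_var_r,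
      add_zero]
  have h_var : Var[fun ω ↦ r ω + p ω; P] = σr2 + σp2 := by
    rw [variance_fun_add hr2 hp2, h_cov_rp, h_var_r, h_var_p]; ring
  have h_mean : P[fun ω ↦ r ω + p ω] = μr + μp := by
    rw [integral_add (hr2.integrable one_le_two) (hp2.integrable one_le_two), hr_hasLaw.integral_eq,
      hp_hasLaw.integral_eq, integral_id_gaussianReal, integral_id_gaussianReal]
  filter_upwards [hr_sum.condExp_comap_ae_eq (hr.add hp)] with ω hω
  rw [hω, h_cov, h_var, h_mean, hr_hasLaw.integral_eq, integral_id_gaussianReal]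
  ring

/-- Linearity of the Gaussian conditional expectation (as used in Lucas'
islands model): if `r` and `p` are independent Gaussian random variables with
means `μr, μp` and variances `σr2, σp2` (with `σr2 + σp2 > 0`), then almost
surely `E[r ∣ r + p] = μr + (σr2/(σr2 + σp2)) * ((r + p) - μr - μp)`. -/
theorem gaussian_condexp_linear
    {Ω : Type*} [MeasurableSpace Ω] (P : Measure Ω) [IsProbabilityMeasure P]
    (r p : Ω → ℝ) (hr : Measurable r) (hp : Measurable p)
    (h_indep : IndepFun r p P)
    (μr μp : ℝ) (σr2 σp2 : ℝ≥0)
    (hr_law : P.map r = gaussianReal μr σr2)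
    (hp_law : P.map p = gaussianReal μp σp2)
    (h_pos : 0 < σr2 + σp2) :
    P[r | MeasurableSpace.comap (fun ω => r ω + p ω) Real.measurableSpace]
      =ᵐ[P] fun ω =>
        μr + ((σr2 : ℝ) / ((σr2 : ℝ) + (σp2 : ℝ))) * ((r ω + p ω) - μr - μp) :=
  gaussian_condexp_linear_general P r p hr hp h_indep μr μp σr2 σp2 hr_law hp_law
end

section
/- Optimal monetary policy rule in Fischer's staggered-contracts model: Let ρ₁, ρ₂ be real numbers with ρ₁² < 1, and let σ_ε² ≥ 0 and σ_ξ² ≥ 0. Define, for real policy parameters a and b, V(a,b) = σ_ε² · (1/4 + (4/9)ρ₁² + ρ₁⁴/(1 − ρ₁²) + a(4ρ₁ + a)/9) + σ_ξ² · (1/4 + (1/9)ρ₂² − b(2ρ₂ − b)/9). Then V attains its global minimum over ℝ² at (a, b) = (−2ρ₁, ρ₂); that is, V(−2ρ₁, ρ₂) ≤ V(a, b) for all real a, b. -/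
/-- The asymptotic variance of output in Fischer's staggered-contracts model,
as a function of the monetary policy parameters `a` and `b`. -/
noncomputable def fischerVariance (ρ₁ ρ₂ σε2 σξ2 a b : ℝ) : ℝ :=
  σε2 * (1 / 4 + (4 / 9) * ρ₁ ^ 2 + ρ₁ ^ 4 / (1 - ρ₁ ^ 2) + a * (4 * ρ₁ + a) / 9)
    + σξ2 * (1 / 4 + (1 / 9) * ρ₂ ^ 2 - b * (2 * ρ₂ - b) / 9)

/-- Optimal monetary policy rule in Fischer's staggered-contracts model: the
asymptotic output variance `V(a, b)` attains its global minimum over `ℝ²` at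
`(a, b) = (-2ρ₁, ρ₂)`. -/
theorem fischer_optimal_policy
    (ρ₁ ρ₂ : ℝ) (hρ₁ : ρ₁ ^ 2 < 1)
    (σε2 σξ2 : ℝ) (hσε : 0 ≤ σε2) (hσξ : 0 ≤ σξ2) :
    ∀ a b : ℝ, fischerVariance ρ₁ ρ₂ σε2 σξ2 (-2 * ρ₁) ρ₂
      ≤ fischerVariance ρ₁ ρ₂ σε2 σξ2 a b := by
  intro a b
  unfold fischerVariance
  have h1 : σε2 * ((a + 2 * ρ₁) ^ 2 / 9) + σξ2 * ((b - ρ₂) ^ 2 / 9) ≥ 0 := by positivity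
  nlinarith [sq_nonneg (a + 2 * ρ₁), sq_nonneg (b - ρ₂)]
end

section
/- The Calvo-pricing inflation recursion (perfect-foresight version): Let ρ ∈ (0,1] and γ ∈ (0,1), let q : ℤ → ℝ be a bounded sequence (the optimal reset log-prices), and let p : ℤ → ℝ satisfy, for every t ∈ ℤ, p(t) = ρ(1−γ) Σ_{s=0}^{∞} γ^s q(t+s) + (1−ρ) p(t−1), where the series converges since q is bounded and 0 < γ < 1. Define inflation π(t) = p(t) − p(t−1). Then for every t ∈ ℤ, π(t) = (ρ(1−γ)/(1−ργ)) (q(t) − p(t−1)) + (γ/(1−ργ)) π(t+1). -/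
/-!
Peeling off the first term of the discounted sum of reset prices gives
`∑ γ^s q(t+s) = q t + γ ∑ γ^s q(t+1+s)`. Subtracting `γ` times the price equation at `t + 1`
from the one at `t` therefore eliminates the infinite sum, leaving the linear relation
`(1 - ργ) π t = ρ(1-γ) (q t - p (t-1)) + γ π (t+1)`; divide by `1 - ργ > 0`.
-/

theorem summable_pow_mul_of_abs_le {γ M : ℝ} (hγ : |γ| < 1) {f : ℕ → ℝ}
    (hf : ∀ n, |f n| ≤ M) : Summable fun n => γ ^ n * f n :=
  ((summable_geometric_of_lt_one (abs_nonneg γ) hγ).mul_right M).of_norm_bounded fun n => by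
    rw [norm_mul, norm_pow, Real.norm_eq_abs, Real.norm_eq_abs]
    exact mul_le_mul_of_nonneg_left (hf n) (by positivity)

theorem tsum_pow_mul_eq_add_mul_tsum_succ {γ : ℝ} {f : ℕ → ℝ}
    (hf : Summable fun n => γ ^ n * f n) :
    ∑' n, γ ^ n * f n = f 0 + γ * ∑' n, γ ^ n * f (n + 1) := by
  rw [hf.tsum_eq_zero_add, ← tsum_mul_left]
  simp only [pow_zero, one_mul, pow_succ, mul_comm _ γ, mul_assoc]

theorem calvo_inflation_recursion_general
    (ρ γ : ℝ) (hρ1 : ρ ≤ 1) (hγ0 : 0 < γ) (hγ1 : γ < 1)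
    (q p : ℤ → ℝ) (hq_bdd : ∃ M : ℝ, ∀ t : ℤ, |q t| ≤ M)
    (hp : ∀ t : ℤ, p t
      = ρ * (1 - γ) * (∑' s : ℕ, γ ^ s * q (t + s)) + (1 - ρ) * p (t - 1)) :
    ∀ t : ℤ, p t - p (t - 1)
      = (ρ * (1 - γ) / (1 - ρ * γ)) * (q t - p (t - 1))
        + (γ / (1 - ρ * γ)) * (p (t + 1) - p t) := by
  obtain ⟨M, hM⟩ := hq_bdd
  intro t
  have hsummable : Summable fun s : ℕ => γ ^ s * q (t + s) :=
    summable_pow_mul_of_abs_le (abs_lt.2 ⟨by linarith, hγ1⟩) fun s => hM (t + s)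
  have hshift : ∑' s : ℕ, γ ^ s * q (t + s) = q t + γ * ∑' s : ℕ, γ ^ s * q (t + 1 + s) := by
    rw [tsum_pow_mul_eq_add_mul_tsum_succ hsummable]
    push_cast
    simp only [add_zero, add_comm, add_left_comm]
  have hp_succ := hp (t + 1)
  rw [add_sub_cancel_right] at hp_succ
  have hlinear : (1 - ρ * γ) * (p t - p (t - 1))
      = ρ * (1 - γ) * (q t - p (t - 1)) + γ * (p (t + 1) - p t) := by
    linear_combination hp t - γ * hp_succ + ρ * (1 - γ) * hshift
  have hργ : 0 < 1 - ρ * γ := by nlinarith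
  field_simp
  linarith

/-- The Calvo-pricing inflation recursion (perfect-foresight version): if the
aggregate log price level satisfies
`p t = ρ(1-γ) ∑_{s≥0} γ^s q(t+s) + (1-ρ) p(t-1)` for all `t`, with `q` bounded
and `ρ ∈ (0,1]`, `γ ∈ (0,1)`, then inflation `π t = p t - p (t-1)` satisfies
`π t = (ρ(1-γ)/(1-ργ)) (q t - p (t-1)) + (γ/(1-ργ)) π (t+1)`. -/
theorem calvo_inflation_recursion
    (ρ γ : ℝ) (hρ0 : 0 < ρ) (hρ1 : ρ ≤ 1) (hγ0 : 0 < γ) (hγ1 : γ < 1)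
    (q p : ℤ → ℝ) (hq_bdd : ∃ M : ℝ, ∀ t : ℤ, |q t| ≤ M)
    (hp : ∀ t : ℤ, p t
      = ρ * (1 - γ) * (∑' s : ℕ, γ ^ s * q (t + s)) + (1 - ρ) * p (t - 1)) :
    ∀ t : ℤ, p t - p (t - 1)
      = (ρ * (1 - γ) / (1 - ρ * γ)) * (q t - p (t - 1))
        + (γ / (1 - ρ * γ)) * (p (t + 1) - p t) :=
  calvo_inflation_recursion_general ρ γ hρ1 hγ0 hγ1 q p hq_bdd hp
end
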